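/- The stay-or-roll protocol is not self-stabilizing on all 2×2×2 games: there is a three-player game over {1,2}³, with a unique pure Nash equilibrium p = (1,1,1), in which for every state a with a_3 = 2, action 2 is a best response of player 3 at a; consequently, under stay-or-roll dynamics, from any initial state with a_3 = 2, player 3 never changes its action and the unique PNE (1,1,1) is never reached. -/

import Mathlib

open scoped Classical

variable {n : ℕ} {A : Fin n → Type*}

/-- `α` is a best response of node `i` at state `a` with respect to `i`'s own
utility function `ui`. -/
def IsBR1 (ui : (∀ j, A j) → ℝ) (i : Fin n) (α : A i) (a : ∀ j, A j) : Prop :=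
  ∀ β : A i, ui (Function.update a i β) ≤ ui (Function.update a i α)

/-- A pure Nash equilibrium: every node is best-responding. -/
def PNE (u : ∀ i : Fin n, (∀ j, A j) → ℝ) (a : ∀ j, A j) : Prop :=
  ∀ i : Fin n, IsBR1 (u i) i (a i) a

/-- `α` is a weakly dominant action of node `i`: it is a best response at every
state. -/
def WDom (ui : (∀ j, A j) → ℝ) (i : Fin n) (α : A i) : Prop :=
  ∀ a : ∀ j, A j, IsBR1 ui i α a

/-- Transition probability of the synchronous dynamics: all nodes simultaneously and
independently sample new actions from their randomized reaction functions. -/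
def kernel (f : ∀ i : Fin n, (∀ j, A j) → A i → ℝ) (a b : ∀ j, A j) : ℝ :=
  ∏ i : Fin n, f i a (b i)

/-- Distribution of the state at time `t`, starting from `a0`. -/
noncomputable def evolve [∀ i, Fintype (A i)] [∀ i, DecidableEq (A i)]
    (f : ∀ i : Fin n, (∀ j, A j) → A i → ℝ) (a0 : ∀ j, A j) :
    ℕ → (∀ j, A j) → ℝ
  | 0 => fun b => if b = a0 then 1 else 0
  | t + 1 => fun b => ∑ a : ∀ j, A j, evolve f a0 t a * kernel f a b

/-- A historyless randomized uncoupled protocol assigns to each node's utility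
function (independently of the others' utilities) a randomized reaction function;
validity says each value is a probability distribution over the node's actions. -/
def ValidProto [∀ i, Fintype (A i)]
    (P : ∀ i : Fin n, ((∀ j, A j) → ℝ) → (∀ j, A j) → A i → ℝ) : Prop :=
  ∀ (i : Fin n) (ui : (∀ j, A j) → ℝ) (a : ∀ j, A j),
    (∀ α : A i, 0 ≤ P i ui a α) ∧ ∑ α : A i, P i ui a α = 1

/-- The protocol is self-stabilizing on all games over `A`: for every game with at
least one pure Nash equilibrium, from every initial state the probability of being
at a PNE at time `t` tends to `1`. -/
def SelfStab [∀ i, Fintype (A i)] [∀ i, DecidableEq (A i)]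
    (P : ∀ i : Fin n, ((∀ j, A j) → ℝ) → (∀ j, A j) → A i → ℝ) : Prop :=
  ∀ u : ∀ i : Fin n, (∀ j, A j) → ℝ, (∃ p, PNE u p) →
    ∀ a0 : ∀ j, A j,
      Filter.Tendsto
        (fun t => ∑ b ∈ Finset.univ.filter (fun b => PNE u b),
          evolve (fun i => P i (u i)) a0 t b)
        Filter.atTop (nhds 1)


/-- The stay-or-roll protocol: a node keeps its action if it is best-responding at
the current state, and otherwise picks an action uniformly at random. -/
noncomputable def SOR [∀ i, Fintype (A i)] [∀ i, DecidableEq (A i)]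
    (i : Fin n) (ui : (∀ j, A j) → ℝ) (a : ∀ j, A j) (α : A i) : ℝ :=
  if IsBR1 ui i (a i) a then (if α = a i then 1 else 0)
  else 1 / (Fintype.card (A i))

/-! Under stay-or-roll a best-responding player keeps its action with probability one. In the game
below, action `2` of player 3 is a best response at every state where it is played, so the set of
states with `a₃ = 2` is closed under the dynamics, while the unique equilibrium `(1,1,1)` lies
outside it. -/

section Dynamics

variable [∀ i, Fintype (A i)] [∀ i, DecidableEq (A i)]

theorem SOR_nonneg (i : Fin n) (ui : (∀ j, A j) → ℝ) (a : ∀ j, A j) (α : A i) :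
    0 ≤ SOR i ui a α := by
  unfold SOR
  split_ifs <;> positivity

theorem SOR_eq_zero_of_isBR1 {i : Fin n} {ui : (∀ j, A j) → ℝ} {a : ∀ j, A j} {α : A i}
    (hbr : IsBR1 ui i (a i) a) (hα : α ≠ a i) : SOR i ui a α = 0 := by
  simp [SOR, hbr, hα]

theorem evolve_nonneg {f : ∀ i : Fin n, (∀ j, A j) → A i → ℝ} (hf : ∀ i a α, 0 ≤ f i a α)
    (a0 : ∀ j, A j) (t : ℕ) (b : ∀ j, A j) : 0 ≤ evolve f a0 t b := by
  induction t generalizing b with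
  | zero => unfold evolve; positivity
  | succ t ih =>
    exact Finset.sum_nonneg fun a _ =>
      mul_nonneg (ih a) (Finset.prod_nonneg fun i _ => hf i a (b i))

theorem mem_of_evolve_pos {f : ∀ i : Fin n, (∀ j, A j) → A i → ℝ} (hf : ∀ i a α, 0 ≤ f i a α)
    {S : Set (∀ j, A j)} (hS : ∀ a b, a ∈ S → kernel f a b ≠ 0 → b ∈ S)
    {a0 : ∀ j, A j} (ha0 : a0 ∈ S) {t : ℕ} {b : ∀ j, A j} (hb : 0 < evolve f a0 t b) :
    b ∈ S := by
  induction t generalizing b with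
  | zero =>
    by_cases h : b = a0
    · exact h ▸ ha0
    · simp [evolve, h] at hb
  | succ t ih =>
    obtain ⟨a, -, hab⟩ := Finset.exists_ne_zero_of_sum_ne_zero hb.ne'
    obtain ⟨ha, hk⟩ := mul_ne_zero_iff.mp hab
    exact hS a b (ih ((evolve_nonneg hf a0 t a).lt_of_ne' ha)) hk

theorem SOR_evolve_apply_eq_of_pos {u : Fin n → (∀ j, A j) → ℝ} {i : Fin n} {α : A i}
    (hα : ∀ a : ∀ j, A j, a i = α → IsBR1 (u i) i α a) {a0 : ∀ j, A j} (ha0 : a0 i = α)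
    {t : ℕ} {b : ∀ j, A j} (hb : 0 < evolve (fun j => SOR j (u j)) a0 t b) : b i = α := by
  refine mem_of_evolve_pos (S := {a | a i = α}) (fun _ _ _ => SOR_nonneg _ _ _ _) ?_ ha0 hb
  intro a b (ha : a i = α) hk
  have hbi : SOR i (u i) a (b i) ≠ 0 := Finset.prod_ne_zero_iff.mp hk i (Finset.mem_univ i)
  by_contra hne
  exact hbi (SOR_eq_zero_of_isBR1 (ha ▸ hα a ha) (ha ▸ hne))

theorem SOR_evolve_eq_zero_of_apply_ne {u : Fin n → (∀ j, A j) → ℝ} {i : Fin n} {α : A i}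
    (hα : ∀ a : ∀ j, A j, a i = α → IsBR1 (u i) i α a) {a0 : ∀ j, A j} (ha0 : a0 i = α)
    (t : ℕ) {b : ∀ j, A j} (hb : b i ≠ α) : evolve (fun j => SOR j (u j)) a0 t b = 0 :=
  ((evolve_nonneg (fun _ _ _ => SOR_nonneg _ _ _ _) a0 t b).eq_of_not_lt
    fun hpos => hb (SOR_evolve_apply_eq_of_pos hα ha0 hpos)).symm

end Dynamics

/-- `payoff a` is the vector `M_α[β, γ]` for `a = (α, β, γ)`, with the actions `1, 2` encoded as
`0, 1 : Fin 2`. Payoffs are natural numbers so that the finite checks below are decidable. -/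
def payoff (a : Fin 3 → Fin 2) : Fin 3 → ℕ :=
  ![![![![1, 1, 1], ![1, 0, 1]], ![![1, 0, 0], ![0, 1, 1]]],
    ![![![0, 1, 0], ![0, 1, 1]], ![![0, 0, 0], ![1, 0, 1]]]] (a 0) (a 1) (a 2)

noncomputable def game (i : Fin 3) (a : Fin 3 → Fin 2) : ℝ := payoff a i

theorem isBR1_game_iff {i : Fin 3} {α : Fin 2} {a : Fin 3 → Fin 2} :
    IsBR1 (game i) i α a ↔
      ∀ β : Fin 2, payoff (Function.update a i β) i ≤ payoff (Function.update a i α) i := by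
  simp only [IsBR1, game, Nat.cast_le]

theorem game_pne_zero : PNE game (fun _ => 0) := by
  simp only [PNE, isBR1_game_iff]; decide

theorem game_pne_unique : ∀ q : Fin 3 → Fin 2, PNE game q → q = fun _ => 0 := by
  simp only [PNE, isBR1_game_iff]; decide

theorem game_isBR1_two : ∀ a : Fin 3 → Fin 2, a 2 = 1 → IsBR1 (game 2) 2 1 a := by
  simp only [isBR1_game_iff]; decide

/-- The stay-or-roll protocol is not self-stabilizing on all `2×2×2` games: there is
a three-player game over `{1,2}³` (actions encoded in `Fin 2`, with `1 ↦ 0` and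
`2 ↦ 1`) with a unique pure Nash equilibrium `p = (1,1,1)` (i.e. `fun _ => 0`), in
which for every state `a` with `a_3 = 2` (i.e. `a 2 = 1`) the action `2` is a best
response of player 3 at `a`; consequently, under stay-or-roll dynamics, from any
initial state with `a_3 = 2`, player 3 never changes its action (the state
distribution is supported on states with third coordinate `2`) and the unique PNE is
never reached (it has probability `0` at every time). -/
theorem stmt17 :
    ∃ u : ∀ _ : Fin 3, (Fin 3 → Fin 2) → ℝ,
      PNE u (fun _ => 0) ∧
      (∀ q : Fin 3 → Fin 2, PNE u q → q = fun _ => 0) ∧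
      (∀ a : Fin 3 → Fin 2, a 2 = 1 → IsBR1 (u 2) 2 (1 : Fin 2) a) ∧
      (∀ a0 : Fin 3 → Fin 2, a0 2 = 1 →
        (∀ (t : ℕ) (b : Fin 3 → Fin 2),
          0 < evolve (fun i => SOR i (u i)) a0 t b → b 2 = 1) ∧
        (∀ t : ℕ, evolve (fun i => SOR i (u i)) a0 t (fun _ => 0) = 0)) :=
  ⟨game, game_pne_zero, game_pne_unique, game_isBR1_two, fun _ ha0 =>
    ⟨fun _ _ hb => SOR_evolve_apply_eq_of_pos game_isBR1_two ha0 hb,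
      fun t => SOR_evolve_eq_zero_of_apply_ne game_isBR1_two ha0 t (by decide)⟩⟩
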